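/- arXiv:1710.05748 — 5 statements merged into one kernel-verified Lean document; each statement's English description precedes it below -/
import Mathlib

section
/- Let A₁ = t̄₁t̄₂α₁*q₁, A₂ = t̄₁t̄₂α₁(α₂Δ₁+p₁), B₁ = t̄₁t̄₂α₂*q₂, B₂ = t̄₁t̄₂α₂(α₁Δ₂+p₂), all strictly positive, with A₂ ≤ A₁ and B₂ ≤ B₁. Let R₁ = {(λ₁,λ₂) ∈ ℝ≥0² : λ₁ < A₁ - λ₂(A₁-A₂)/B₂, λ₂ < B₂} and R₂ = {(λ₁,λ₂) ∈ ℝ≥0² : λ₂ < B₁ - λ₁(B₁-B₂)/A₂, λ₁ < A₂}. If A₂/A₁ + B₂/B₁ ≥ 1, then R₁ ∪ R₂ is a convex subset of ℝ². -/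
theorem stmt1 (A1 A2 B1 B2 : ℝ)
    (hA1 : 0 < A1) (hA2 : 0 < A2) (hB1 : 0 < B1) (hB2 : 0 < B2)
    (hA : A2 ≤ A1) (hB : B2 ≤ B1)
    (R1 R2 : Set (ℝ × ℝ))
    (hR1 : R1 = {p : ℝ × ℝ | 0 ≤ p.1 ∧ 0 ≤ p.2 ∧
        p.1 < A1 - p.2 * (A1 - A2) / B2 ∧ p.2 < B2})
    (hR2 : R2 = {p : ℝ × ℝ | 0 ≤ p.1 ∧ 0 ≤ p.2 ∧
        p.2 < B1 - p.1 * (B1 - B2) / A2 ∧ p.1 < A2})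
    (hcond : A2 / A1 + B2 / B1 ≥ 1) :
    Convex ℝ (R1 ∪ R2) := by
  -- turn hcond into polynomial form
  have hc : A1 * B1 ≤ A2 * B1 + A1 * B2 := by
    rw [ge_iff_le, div_add_div _ _ hA1.ne' hB1.ne',
      le_div_iff₀ (mul_pos hA1 hB1)] at hcond
    nlinarith [hcond]
  have hdiv : ∀ c e x d : ℝ, 0 < d → (x < c - e / d ↔ x * d + e < c * d) := by
    intro c e x d hd
    rw [lt_sub_iff_add_lt, add_div' _ _ _ hd.ne', div_lt_iff₀ hd]
  -- the union equals an intersection of four half-planes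
  have key : R1 ∪ R2 = {p : ℝ × ℝ | 0 ≤ p.1 ∧ 0 ≤ p.2 ∧
      p.1 * B2 + p.2 * (A1 - A2) < A1 * B2 ∧
      p.2 * A2 + p.1 * (B1 - B2) < B1 * A2} := by
    ext ⟨x, y⟩
    simp only [hR1, hR2, Set.mem_union, Set.mem_setOf_eq]
    constructor
    · rintro (⟨hx, hy, h1, h2⟩ | ⟨hx, hy, h1, h2⟩)
      · rw [hdiv _ _ _ _ hB2] at h1
        refine ⟨hx, hy, h1, ?_⟩
        rcases eq_or_lt_of_le hB with hBe | hBl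
        · rw [← hBe]
          nlinarith [mul_lt_mul_of_pos_right h2 hA2]
        · nlinarith [mul_pos (sub_pos.mpr h1) (sub_pos.mpr hBl),
            mul_nonneg (sub_nonneg.mpr h2.le)
              (by linarith : (0:ℝ) ≤ A2 * B1 + A1 * B2 - A1 * B1),
            mul_pos hB2 hA2]
      · rw [hdiv _ _ _ _ hA2] at h1
        refine ⟨hx, hy, ?_, h1⟩
        rcases eq_or_lt_of_le hA with hAe | hAl
        · rw [← hAe]
          nlinarith [mul_lt_mul_of_pos_right h2 hB2]
        · nlinarith [mul_pos (sub_pos.mpr h1) (sub_pos.mpr hAl),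
            mul_nonneg (sub_nonneg.mpr h2.le)
              (by linarith : (0:ℝ) ≤ A2 * B1 + A1 * B2 - A1 * B1),
            mul_pos hA2 hB2]
    · rintro ⟨hx, hy, h1, h2⟩
      by_cases hyB : y < B2
      · left
        refine ⟨hx, hy, ?_, hyB⟩
        rw [hdiv _ _ _ _ hB2]
        nlinarith
      · right
        push_neg at hyB
        have hxA : x < A2 := by nlinarith
        refine ⟨hx, hy, ?_, hxA⟩
        rw [hdiv _ _ _ _ hA2]
        nlinarith
  rw [key]
  intro p hp q hq a b ha hb hab
  obtain ⟨hp1, hp2, hp3, hp4⟩ := hp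
  obtain ⟨hq1, hq2, hq3, hq4⟩ := hq
  have e1 : (a • p + b • q).1 = a * p.1 + b * q.1 := rfl
  have e2 : (a • p + b • q).2 = a * p.2 + b * q.2 := rfl
  have comb : ∀ u v K : ℝ, u < K → v < K → a * u + b * v < K := by
    intro u v K hu hv
    have step : a * u + b * v < a * K + b * K := by
      rcases ha.eq_or_lt with h | h
      · rcases hb.eq_or_lt with h' | h'
        · exfalso; rw [← h, ← h'] at hab; norm_num at hab
        · rw [← h]; simpa using mul_lt_mul_of_pos_left hv h'
      · rcases hb.eq_or_lt with h' | h'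
        · rw [← h']; simpa using mul_lt_mul_of_pos_left hu h
        · exact add_lt_add (mul_lt_mul_of_pos_left hu h) (mul_lt_mul_of_pos_left hv h')
    calc a * u + b * v < a * K + b * K := step
      _ = K := by rw [← add_mul, hab, one_mul]
  refine ⟨by rw [e1]; positivity, by rw [e2]; positivity, ?_, ?_⟩
  · rw [e1, e2]
    calc (a * p.1 + b * q.1) * B2 + (a * p.2 + b * q.2) * (A1 - A2)
        = a * (p.1 * B2 + p.2 * (A1 - A2)) + b * (q.1 * B2 + q.2 * (A1 - A2)) := by ring
      _ < A1 * B2 := comb _ _ _ hp3 hq3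
  · rw [e1, e2]
    calc (a * p.2 + b * q.2) * A2 + (a * p.1 + b * q.1) * (B1 - B2)
        = a * (p.2 * A2 + p.1 * (B1 - B2)) + b * (q.2 * A2 + q.1 * (B1 - B2)) := by ring
      _ < B1 * A2 := comb _ _ _ hp4 hq4
end

section
/- With A₁, A₂, B₁, B₂ as above and A₂/A₁ + B₂/B₁ = 1, the region R₁ ∪ R₂ equals the triangle {(λ₁,λ₂) ∈ ℝ≥0² : λ₁/A₁ + λ₂/B₁ < 1}. -/
theorem stmt2 (A1 A2 B1 B2 : ℝ)
    (hA1 : 0 < A1) (hA2 : 0 < A2) (hB1 : 0 < B1) (hB2 : 0 < B2)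
    (hA : A2 ≤ A1) (hB : B2 ≤ B1)
    (R1 R2 : Set (ℝ × ℝ))
    (hR1 : R1 = {p : ℝ × ℝ | 0 ≤ p.1 ∧ 0 ≤ p.2 ∧
        p.1 < A1 - p.2 * (A1 - A2) / B2 ∧ p.2 < B2})
    (hR2 : R2 = {p : ℝ × ℝ | 0 ≤ p.1 ∧ 0 ≤ p.2 ∧
        p.2 < B1 - p.1 * (B1 - B2) / A2 ∧ p.1 < A2})
    (hcond : A2 / A1 + B2 / B1 = 1) :
    R1 ∪ R2 = {p : ℝ × ℝ | 0 ≤ p.1 ∧ 0 ≤ p.2 ∧ p.1 / A1 + p.2 / B1 < 1} := by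
  have h1 : A2 * B1 + B2 * A1 = A1 * B1 := by
    field_simp at hcond; linarith
  ext ⟨x, y⟩
  simp only [hR1, hR2, Set.mem_union, Set.mem_setOf_eq]
  have tri : (x / A1 + y / B1 < 1) ↔ (x * B1 + y * A1 < A1 * B1) := by
    rw [div_add_div _ _ (ne_of_gt hA1) (ne_of_gt hB1), div_lt_one (by positivity)]
    constructor <;> intro <;> linarith
  constructor
  · rintro (⟨hx, hy, h, hyB⟩ | ⟨hx, hy, h, hxA⟩)
    · refine ⟨hx, hy, ?_⟩
      rw [tri]
      have h' : x * B2 + y * (A1 - A2) < A1 * B2 := by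
        have := mul_lt_mul_of_pos_right h hB2
        field_simp at this
        nlinarith [this]
      nlinarith [mul_lt_mul_of_pos_right h' hB1, hB2, hA1]
    · refine ⟨hx, hy, ?_⟩
      rw [tri]
      have h' : y * A2 + x * (B1 - B2) < B1 * A2 := by
        have := mul_lt_mul_of_pos_right h hA2
        field_simp at this
        nlinarith [this]
      nlinarith [mul_lt_mul_of_pos_right h' hA1, hA2, hB1]
  · rintro ⟨hx, hy, h⟩
    rw [tri] at h
    by_cases hyB : y < B2
    · left
      refine ⟨hx, hy, ?_, hyB⟩
      have key : x * B2 + y * (A1 - A2) < A1 * B2 := by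
        nlinarith [mul_lt_mul_of_pos_right h hB2, hB1]
      rw [lt_sub_iff_add_lt, ← lt_sub_iff_add_lt', div_lt_iff₀ hB2] at *
      nlinarith [key]
    · right
      push_neg at hyB
      have hxA : x < A2 := by nlinarith
      refine ⟨hx, hy, ?_, hxA⟩
      have key : y * A2 + x * (B1 - B2) < B1 * A2 := by
        nlinarith [mul_lt_mul_of_pos_right h hA2, hA1]
      rw [lt_sub_iff_add_lt, ← lt_sub_iff_add_lt', div_lt_iff₀ hA2] at *
      nlinarith [key]
end

section
/- Let Ψ(x,y) be a function satisfying |Ψ(x,y)| < 1 for all |x| = 1, |y| = 1 with y ≠ 1 (Ψ being a probability generating function value with the strict inequality). Then for fixed y on the unit circle with y ≠ 1, the function x ↦ xy − Ψ(x,y) has exactly one zero x = X₀(y) in the open unit disc |x| < 1. -/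
open Metric Set Complex

noncomputable def moeb (c z : ℂ) : ℂ := (c - z) / (1 - (starRingEnd ℂ) c * z)

lemma moeb_denom_ne {c z : ℂ} (h : ‖c‖ * ‖z‖ < 1) : 1 - (starRingEnd ℂ) c * z ≠ 0 := by
  intro h0
  have h1 : (1:ℂ) = (starRingEnd ℂ) c * z := by linear_combination h0
  have h2 := congrArg norm h1
  simp [norm_mul] at h2
  rw [h2] at h
  exact absurd h (by norm_num)

lemma moeb_normSq_identity (c z : ℂ) :
    ‖1 - (starRingEnd ℂ) c * z‖^2 - ‖c - z‖^2 = (1 - ‖c‖^2) * (1 - ‖z‖^2) := by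
  simp only [Complex.sq_norm]
  simp [Complex.normSq_apply, Complex.mul_re, Complex.mul_im]
  ring

lemma moeb_norm_lt {c z : ℂ} (hc : ‖c‖ < 1) (hz : ‖z‖ < 1) : ‖moeb c z‖ < 1 := by
  have hc0 : 0 ≤ ‖c‖ := norm_nonneg c
  have hz0 : 0 ≤ ‖z‖ := norm_nonneg z
  have hd : 1 - (starRingEnd ℂ) c * z ≠ 0 := by
    apply moeb_denom_ne
    nlinarith
  have hdd : 0 < ‖1 - (starRingEnd ℂ) c * z‖ := norm_pos_iff.mpr hd
  have hid := moeb_normSq_identity c z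
  have hsq : ‖c - z‖^2 < ‖1 - (starRingEnd ℂ) c * z‖^2 := by
    have h1 : ‖c‖^2 < 1 := by nlinarith
    have h2 : ‖z‖^2 < 1 := by nlinarith
    nlinarith [mul_pos (sub_pos.mpr h1) (sub_pos.mpr h2)]
  have hnum : ‖c - z‖ < ‖1 - (starRingEnd ℂ) c * z‖ :=
    lt_of_pow_lt_pow_left₀ 2 hdd.le hsq
  rw [moeb, norm_div, div_lt_one hdd]
  exact hnum

lemma moeb_invol {c z : ℂ} (hc : ‖c‖ < 1) (hcz : ‖c‖ * ‖z‖ < 1) : moeb c (moeb c z) = z := by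
  have hd : 1 - (starRingEnd ℂ) c * z ≠ 0 := moeb_denom_ne hcz
  have hcc : 1 - (starRingEnd ℂ) c * c ≠ 0 := by
    apply moeb_denom_ne; nlinarith [norm_nonneg c]
  rw [moeb, moeb]
  rw [div_eq_iff]
  · have hd' : 1 - z * (starRingEnd ℂ) c ≠ 0 := by rwa [mul_comm]
    field_simp
    ring
  · intro h0
    apply hcc
    have : (1 - (starRingEnd ℂ) c * ((c - z) / (1 - (starRingEnd ℂ) c * z))) * (1 - (starRingEnd ℂ) c * z) = 1 - (starRingEnd ℂ) c * c := by
      field_simp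
      ring
    rw [h0, zero_mul] at this
    exact this.symm

lemma moeb_bound_core {P Q s r : ℝ} (hP0 : 0 ≤ P) (hQ0 : 0 ≤ Q) (hPr : P ≤ r^2)
    (hQr : Q ≤ r^2) (hsPQ : s^2 ≤ P*Q) (hr0 : 0 ≤ r) (hr1 : r < 1) :
    (P + Q - 2*s) * (1+r^2)^2 ≤ 4*r^2 * (1 + P*Q - 2*s) := by
  rcases hr0.lt_or_eq with hr0' | hr0'
  · have hr2 : 0 < r^2 := by positivity
    have hstep : 0 ≤ 2*s*r^2 + P*Q + r^4 := by nlinarith [sq_nonneg (s + r^2)]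
    have hrr : r^2 < 1 := by nlinarith [mul_self_lt_mul_self hr0 hr1]
    have h4 : 0 ≤ 4 - (1-r^2)^2 := by nlinarith [hrr, sq_nonneg r]
    have h5 : 0 ≤ 1 - r^4 := by nlinarith [hrr, sq_nonneg r]
    have r4 : (0:ℝ) < r^4 := by positivity
    have hA : 0 ≤ ((r^2-P)*(r^2-Q)) * (r^4*(4-(1-r^2)^2)) :=
      mul_nonneg (mul_nonneg (sub_nonneg.mpr hPr) (sub_nonneg.mpr hQr))
        (mul_nonneg r4.le h4)
    have hB1 : 0 ≤ (P*(r^2-Q)) * (2*r^4*(1-r^4)) :=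
      mul_nonneg (mul_nonneg hP0 (sub_nonneg.mpr hQr)) (mul_nonneg (by positivity) h5)
    have hC1 : 0 ≤ (Q*(r^2-P)) * (2*r^4*(1-r^4)) :=
      mul_nonneg (mul_nonneg hQ0 (sub_nonneg.mpr hPr)) (mul_nonneg (by positivity) h5)
    have hB4 : r^4 * 0 ≤ r^4 * (4*r^4*(1+P*Q) - r^2*(P+Q)*(1+r^2)^2 - (P*Q+r^4)*(1-r^2)^2) := by
      nlinarith [hA, hB1, hC1]
    have hB := (mul_le_mul_iff_right₀ r4).mp hB4
    have hr2X : r^2 * 0 ≤ r^2 * (4*r^2*(1 + P*Q - 2*s) - (P+Q-2*s)*(1+r^2)^2) := by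
      nlinarith [hB, mul_nonneg hstep (sq_nonneg (1 - r^2))]
    have hX := (mul_le_mul_iff_right₀ hr2).mp hr2X
    linarith
  · have hrr : r = 0 := hr0'.symm
    subst hrr
    have hP : P = 0 := le_antisymm (by linarith [hPr]) hP0
    have hQ : Q = 0 := le_antisymm (by linarith [hQr]) hQ0
    subst hP; subst hQ
    have hs : s = 0 := by nlinarith [sq_nonneg s]
    subst hs
    norm_num

lemma moeb_bound {a w : ℂ} {r : ℝ} (ha : ‖a‖ ≤ r) (hw : ‖w‖ ≤ r) (hr : r < 1) :
    ‖moeb a w‖ * (1 + r^2) ≤ 2 * r := by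
  have hr0 : 0 ≤ r := le_trans (norm_nonneg a) ha
  have hd : 1 - (starRingEnd ℂ) a * w ≠ 0 := by
    apply moeb_denom_ne; nlinarith [norm_nonneg a, norm_nonneg w]
  have hdd : 0 < ‖1 - (starRingEnd ℂ) a * w‖ := norm_pos_iff.mpr hd
  have e1 : ‖a - w‖^2 = ‖a‖^2 + ‖w‖^2 - 2*(a.re*w.re + a.im*w.im) := by
    simp only [Complex.sq_norm]
    simp [Complex.normSq_apply]
    ring
  have e2 : ‖1 - (starRingEnd ℂ) a * w‖^2 = 1 + ‖a‖^2 * ‖w‖^2 - 2*(a.re*w.re + a.im*w.im) := by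
    simp only [Complex.sq_norm]
    simp [Complex.normSq_apply, Complex.mul_re, Complex.mul_im]
    ring
  have hPr : ‖a‖^2 ≤ r^2 := by nlinarith [norm_nonneg a]
  have hQr : ‖w‖^2 ≤ r^2 := by nlinarith [norm_nonneg w]
  have hsPQ : (a.re*w.re + a.im*w.im)^2 ≤ ‖a‖^2 * ‖w‖^2 := by
    simp only [Complex.sq_norm]
    simp only [Complex.normSq_apply]
    nlinarith [sq_nonneg (a.re*w.im - a.im*w.re)]
  have key := moeb_bound_core (sq_nonneg ‖a‖) (sq_nonneg ‖w‖) hPr hQr hsPQ hr0 hr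
  have key2 : ‖a - w‖^2 * (1+r^2)^2 ≤ (2*r)^2 * ‖1 - (starRingEnd ℂ) a * w‖^2 := by
    rw [e1, e2]; nlinarith [key]
  have hm : ‖moeb a w‖ = ‖a - w‖ / ‖1 - (starRingEnd ℂ) a * w‖ := by
    rw [moeb, norm_div]
  rw [hm, div_mul_eq_mul_div, div_le_iff₀ hdd]
  have h3 : 0 ≤ 2 * r * ‖1 - (starRingEnd ℂ) a * w‖ := by positivity
  have key3 : (‖a - w‖ * (1+r^2))^2 ≤ (2*r*‖1 - (starRingEnd ℂ) a * w‖)^2 := by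
    nlinarith [key2]
  exact le_of_pow_le_pow_left₀ two_ne_zero h3 key3

lemma moeb_differentiableAt {c z : ℂ} (h : 1 - (starRingEnd ℂ) c * z ≠ 0) :
    DifferentiableAt ℂ (moeb c) z := by
  apply DifferentiableAt.div
  · exact (differentiableAt_const _).sub differentiableAt_id
  · exact (differentiableAt_const _).sub ((differentiableAt_const _).mul differentiableAt_id)
  · exact h

lemma moeb_self (c : ℂ) : moeb c c = 0 := by simp [moeb]

lemma moeb_zero (c : ℂ) : moeb c 0 = c := by simp [moeb]

lemma pick {g : ℂ → ℂ} {r : ℝ} (hr0 : 0 ≤ r) (hr : r < 1)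
    (hd : DifferentiableOn ℂ g (ball 0 1))
    (hb : ∀ z ∈ ball (0:ℂ) 1, ‖g z‖ ≤ r)
    {u v : ℂ} (hu : ‖u‖ < 1) (hv : ‖v‖ < 1) :
    ‖moeb (g u) (g v)‖ * (1 + r^2) ≤ 2 * r * ‖moeb u v‖ := by
  have hu' : u ∈ ball (0:ℂ) 1 := mem_ball_zero_iff.mpr hu
  have ha : ‖g u‖ ≤ r := hb u hu'
  set φ : ℂ → ℂ := fun z => moeb (g u) (g (moeb u z)) with hφ
  have hr2 : (0:ℝ) < 1 + r^2 := by positivity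
  have hk0 : 0 ≤ 2*r/(1+r^2) := by positivity
  -- differentiability of φ on the unit ball
  have φdiff : DifferentiableOn ℂ φ (ball 0 1) := by
    intro z hz
    have hz' : ‖z‖ < 1 := mem_ball_zero_iff.mp hz
    have hmem : moeb u z ∈ ball (0:ℂ) 1 := mem_ball_zero_iff.mpr (moeb_norm_lt hu hz')
    have d1 : DifferentiableAt ℂ (moeb u) z :=
      moeb_differentiableAt (moeb_denom_ne (by nlinarith [norm_nonneg u, norm_nonneg z]))
    have d2 : DifferentiableAt ℂ g (moeb u z) :=
      hd.differentiableAt (isOpen_ball.mem_nhds hmem)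
    have hgm : ‖g (moeb u z)‖ ≤ r := hb _ hmem
    have d3 : DifferentiableAt ℂ (moeb (g u)) (g (moeb u z)) := by
      apply moeb_differentiableAt
      apply moeb_denom_ne
      nlinarith [norm_nonneg (g u), norm_nonneg (g (moeb u z))]
    have dcomp : DifferentiableAt ℂ (g ∘ moeb u) z := d2.comp z d1
    have dall : DifferentiableAt ℂ (moeb (g u) ∘ (g ∘ moeb u)) z := by
      exact DifferentiableAt.comp z d3 dcomp
    exact dall.differentiableWithinAt
  have φ0 : φ 0 = 0 := by rw [hφ]; simp only; rw [moeb_zero, moeb_self]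
  -- Schwarz estimate
  have schwarz : ∀ z ∈ ball (0:ℂ) 1, ‖φ z‖ ≤ (2*r/(1+r^2)) * ‖z‖ := by
    intro z hz
    have hz' : ‖z‖ < 1 := mem_ball_zero_iff.mp hz
    refine le_of_forall_pos_le_add fun ε hε => ?_
    have hmaps : Set.MapsTo φ (ball (0:ℂ) 1) (ball (φ 0) (2*r/(1+r^2) + ε)) := by
      intro w hw
      have hw' : ‖w‖ < 1 := mem_ball_zero_iff.mp hw
      have hmem : moeb u w ∈ ball (0:ℂ) 1 := mem_ball_zero_iff.mpr (moeb_norm_lt hu hw')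
      have hbd := moeb_bound ha (hb _ hmem) hr
      rw [φ0, mem_ball_zero_iff]
      calc ‖φ w‖ ≤ 2*r/(1+r^2) := by
            rw [le_div_iff₀ hr2]
            exact hbd
        _ < 2*r/(1+r^2) + ε := by linarith
    have := dist_le_div_mul_dist_of_mapsTo_ball φdiff (hmaps.mono_right ball_subset_closedBall) hz
    rw [φ0] at this
    simp only [dist_zero_right, div_one] at this
    calc ‖φ z‖ ≤ (2*r/(1+r^2) + ε) * ‖z‖ := this
      _ = 2*r/(1+r^2) * ‖z‖ + ε * ‖z‖ := by ring
      _ ≤ 2*r/(1+r^2) * ‖z‖ + ε := by nlinarith [norm_nonneg z]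
  -- apply at z = moeb u v
  have hzmem : moeb u v ∈ ball (0:ℂ) 1 := mem_ball_zero_iff.mpr (moeb_norm_lt hu hv)
  have happ := schwarz _ hzmem
  have hinv : moeb u (moeb u v) = v :=
    moeb_invol hu (by nlinarith [norm_nonneg u, norm_nonneg v])
  rw [hφ] at happ
  simp only at happ
  rw [hinv] at happ
  have : ‖moeb (g u) (g v)‖ * (1+r^2) ≤ (2*r/(1+r^2) * ‖moeb u v‖) * (1+r^2) := by
    apply mul_le_mul_of_nonneg_right happ hr2.le
  calc ‖moeb (g u) (g v)‖ * (1+r^2) ≤ (2*r/(1+r^2) * ‖moeb u v‖) * (1+r^2) := this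
    _ = 2*r*‖moeb u v‖ := by field_simp

lemma moeb_eq_zero {a b : ℂ} (ha : ‖a‖ < 1) (hb : ‖b‖ < 1) (h : moeb a b = 0) : a = b := by
  have hd : 1 - (starRingEnd ℂ) a * b ≠ 0 :=
    moeb_denom_ne (by nlinarith [norm_nonneg a, norm_nonneg b])
  rw [moeb, div_eq_zero_iff] at h
  rcases h with h | h
  · exact sub_eq_zero.mp h
  · exact absurd h hd

lemma moeb_dist_le {a b : ℂ} (ha : ‖a‖ < 1) (hb : ‖b‖ < 1) :
    ‖a - b‖ ≤ 2 * ‖moeb a b‖ := by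
  have hd : 1 - (starRingEnd ℂ) a * b ≠ 0 :=
    moeb_denom_ne (by nlinarith [norm_nonneg a, norm_nonneg b])
  have hdn : ‖1 - (starRingEnd ℂ) a * b‖ ≤ 2 := by
    calc ‖1 - (starRingEnd ℂ) a * b‖ ≤ ‖(1:ℂ)‖ + ‖(starRingEnd ℂ) a * b‖ := norm_sub_le _ _
      _ ≤ 2 := by
        rw [norm_mul]
        simp only [norm_one]
        have h2 : ‖(starRingEnd ℂ) a‖ = ‖a‖ := by simp
        rw [h2]
        nlinarith [norm_nonneg a, norm_nonneg b]
  have heq : ‖a - b‖ = ‖moeb a b‖ * ‖1 - (starRingEnd ℂ) a * b‖ := by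
    rw [moeb, norm_div, div_mul_cancel₀]
    exact norm_ne_zero_iff.mpr hd
  rw [heq]
  nlinarith [norm_nonneg (moeb a b), norm_nonneg (1 - (starRingEnd ℂ) a * b)]

open Filter Topology in
lemma fixed_point {g : ℂ → ℂ} {r : ℝ} (hr0 : 0 ≤ r) (hr : r < 1)
    (hd : DifferentiableOn ℂ g (ball 0 1)) (hb : ∀ z ∈ ball (0:ℂ) 1, ‖g z‖ ≤ r) :
    ∃! x : ℂ, ‖x‖ < 1 ∧ g x = x := by
  have hr2 : (0:ℝ) < 1 + r^2 := by positivity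
  set k : ℝ := 2*r/(1+r^2) with hk
  have hk0 : 0 ≤ k := by positivity
  have hk1 : k < 1 := by
    rw [hk, div_lt_one hr2]
    nlinarith [sq_nonneg (1-r)]
  set x : ℕ → ℂ := fun n => g^[n] 0 with hx
  have hxsucc : ∀ n, x (n+1) = g (x n) := by
    intro n
    simp only [hx, Function.iterate_succ_apply']
  have hxr : ∀ n, ‖x n‖ ≤ r := by
    intro n
    induction n with
    | zero => simpa [hx] using hr0
    | succ m ih =>
      rw [hxsucc]
      exact hb _ (mem_ball_zero_iff.mpr (lt_of_le_of_lt ih hr))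
  have hx1 : ∀ n, ‖x n‖ < 1 := fun n => lt_of_le_of_lt (hxr n) hr
  have hcontr : ∀ n, ‖moeb (x (n+2)) (x (n+1))‖ ≤ k * ‖moeb (x (n+1)) (x n)‖ := by
    intro n
    have hp := pick hr0 hr hd hb (hx1 (n+1)) (hx1 n)
    rw [← hxsucc, ← hxsucc] at hp
    rw [hk, div_mul_eq_mul_div, le_div_iff₀ hr2]
    linarith
  have hgeo : ∀ n, ‖moeb (x (n+1)) (x n)‖ ≤ k^n * ‖moeb (x 1) (x 0)‖ := by
    intro n
    induction n with
    | zero => simp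
    | succ m ih =>
      calc ‖moeb (x (m+2)) (x (m+1))‖ ≤ k * ‖moeb (x (m+1)) (x m)‖ := hcontr m
        _ ≤ k * (k^m * ‖moeb (x 1) (x 0)‖) := by
            exact mul_le_mul_of_nonneg_left ih hk0
        _ = k^(m+1) * ‖moeb (x 1) (x 0)‖ := by ring
  have hdist : ∀ n, dist (x n) (x (n+1)) ≤ (2 * ‖moeb (x 1) (x 0)‖) * k^n := by
    intro n
    calc dist (x n) (x (n+1)) = ‖x (n+1) - x n‖ := by
          rw [dist_eq_norm, norm_sub_rev]
      _ ≤ 2 * ‖moeb (x (n+1)) (x n)‖ := moeb_dist_le (hx1 (n+1)) (hx1 n)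
      _ ≤ 2 * (k^n * ‖moeb (x 1) (x 0)‖) := by
          exact mul_le_mul_of_nonneg_left (hgeo n) (by norm_num)
      _ = (2 * ‖moeb (x 1) (x 0)‖) * k^n := by ring
  have hcauchy : CauchySeq x := cauchySeq_of_le_geometric k _ hk1 hdist
  obtain ⟨L, hL⟩ := cauchySeq_tendsto_of_complete hcauchy
  have hLr : ‖L‖ ≤ r := le_of_tendsto (hL.norm) (Filter.Eventually.of_forall hxr)
  have hL1 : ‖L‖ < 1 := lt_of_le_of_lt hLr hr
  have hc : ContinuousAt g L :=
    (hd.differentiableAt (isOpen_ball.mem_nhds (mem_ball_zero_iff.mpr hL1))).continuousAt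
  have h1 : Filter.Tendsto (fun n => x (n+1)) Filter.atTop (nhds L) :=
    hL.comp (Filter.tendsto_add_atTop_nat 1)
  have h2 : Filter.Tendsto (fun n => g (x n)) Filter.atTop (nhds (g L)) :=
    hc.tendsto.comp hL
  have hgL : g L = L := by
    have heq : (fun n => x (n+1)) = fun n => g (x n) := funext hxsucc
    rw [heq] at h1
    exact tendsto_nhds_unique h2 h1
  refine ⟨L, ⟨hL1, hgL⟩, ?_⟩
  rintro b ⟨hb1, hbf⟩
  have hp := pick hr0 hr hd hb hb1 hL1
  rw [hbf, hgL] at hp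
  have hmz : ‖moeb b L‖ = 0 := by nlinarith [norm_nonneg (moeb b L), pow_pos (by linarith : (0:ℝ) < 1-r) 2]
  exact moeb_eq_zero hb1 hL1 (norm_eq_zero.mp hmz)

theorem stmt4 (Ψ : ℂ → ℂ → ℂ) (y : ℂ) (hy : ‖y‖ = 1) (hy1 : y ≠ 1)
    (hanal : DifferentiableOn ℂ (fun x => Ψ x y) (Metric.closedBall (0:ℂ) 1))
    (hbound : ∀ x : ℂ, ‖x‖ = 1 → ‖Ψ x y‖ < 1) :
    ∃! x : ℂ, ‖x‖ < 1 ∧ x * y - Ψ x y = 0 := by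
  have hy0 : y ≠ 0 := by
    intro h
    rw [h] at hy
    simp at hy
  -- get the maximum of ‖Ψ · y‖ on the unit sphere
  have hsne : (sphere (0:ℂ) 1).Nonempty := ⟨1, by simp⟩
  have hcont : ContinuousOn (fun x : ℂ => ‖Ψ x y‖) (sphere 0 1) :=
    (hanal.continuousOn.mono sphere_subset_closedBall).norm
  obtain ⟨x₀, hx₀mem, hx₀max'⟩ := (isCompact_sphere (0:ℂ) 1).exists_isMaxOn hsne hcont
  have hx₀max : ∀ w ∈ sphere (0:ℂ) 1, ‖Ψ w y‖ ≤ ‖Ψ x₀ y‖ := fun w hw => hx₀max' hw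
  set r : ℝ := ‖Ψ x₀ y‖ with hrdef
  have hr0 : 0 ≤ r := norm_nonneg _
  have hr1 : r < 1 := hbound x₀ (by simpa using hx₀mem)
  -- maximum modulus principle
  have hdc : DiffContOnCl ℂ (fun x => Ψ x y) (ball (0:ℂ) 1) :=
    ⟨hanal.mono ball_subset_closedBall,
      hanal.continuousOn.mono (by rw [closure_ball (0:ℂ) one_ne_zero])⟩
  have hmax : ∀ z ∈ ball (0:ℂ) 1, ‖Ψ z y‖ ≤ r := by
    intro z hz
    apply Complex.norm_le_of_forall_mem_frontier_norm_le isBounded_ball hdc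
    · intro w hw
      rw [frontier_ball (0:ℂ) one_ne_zero] at hw
      exact hx₀max w hw
    · exact subset_closure hz
  -- the auxiliary map g
  set g : ℂ → ℂ := fun x => Ψ x y / y with hg
  have hgd : DifferentiableOn ℂ g (ball 0 1) :=
    (hanal.mono ball_subset_closedBall).div_const y
  have hgb : ∀ z ∈ ball (0:ℂ) 1, ‖g z‖ ≤ r := by
    intro z hz
    rw [hg]
    simp only [norm_div, hy, div_one]
    exact hmax z hz
  obtain ⟨L, ⟨hL1, hLfix⟩, huniq⟩ := fixed_point hr0 hr1 hgd hgb
  have hiff : ∀ x : ℂ, (g x = x ↔ x * y - Ψ x y = 0) := by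
    intro x
    rw [hg]
    simp only
    rw [div_eq_iff hy0, sub_eq_zero]
    exact eq_comm
  refine ⟨L, ⟨hL1, (hiff L).mp hLfix⟩, ?_⟩
  rintro b ⟨hb1, hbeq⟩
  exact huniq b ⟨hb1, (hiff b).mpr hbeq⟩
end

section
/- In the case d₁/α₁â₂ = α₂â₁/d₂ (equivalently α₁â₂/(α₁*q₁) + α₂â₁/(α₂*q₂) = 1), setting y = 1 and x = 1 in the conservation-of-flow relations λ₁ = t̄₁t̄₂{α₁â₂(1−H(0,1)) − d₁(H(1,0)−H(0,0))} and λ₂ = t̄₁t̄₂{α₂â₁(1−H(1,0)) − d₂(H(0,1)−H(0,0))} yields H(0,0) = 1 − λ₁/(t̄₁t̄₂α₁*q₁) − λ₂/(t̄₁t̄₂α₂*q₂). -/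
theorem stmt8 (t1b t2b a1 a2 a1s a2s ah1 ah2 q1 q2 l1 l2 H10 H01 H00 d1 d2 : ℝ)
    (htb : 0 < t1b * t2b)
    (hQ1 : 0 < a1s * q1) (hQ2 : 0 < a2s * q2)
    (hd1 : d1 = a1 * ah2 - a1s * q1) (hd2 : d2 = a2 * ah1 - a2s * q2)
    (hcond : a1 * ah2 / (a1s * q1) + a2 * ah1 / (a2s * q2) = 1)
    (hflow1 : l1 = t1b * t2b * (a1 * ah2 * (1 - H01) - d1 * (H10 - H00)))
    (hflow2 : l2 = t1b * t2b * (a2 * ah1 * (1 - H10) - d2 * (H01 - H00))) :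
    H00 = 1 - l1 / (t1b * t2b * (a1s * q1)) - l2 / (t1b * t2b * (a2s * q2)) := by
  have hT : t1b * t2b ≠ 0 := ne_of_gt htb
  have h1 : a1s * q1 ≠ 0 := ne_of_gt hQ1
  have h2 : a2s * q2 ≠ 0 := ne_of_gt hQ2
  subst hd1 hd2 hflow1 hflow2
  field_simp at hcond ⊢
  have ht1 : t1b ≠ 0 := left_ne_zero_of_mul hT
  have ht2 : t2b ≠ 0 := right_ne_zero_of_mul hT
  have ha1 : a1s ≠ 0 := left_ne_zero_of_mul h1
  have hq1 : q1 ≠ 0 := right_ne_zero_of_mul h1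
  have ha2 : a2s ≠ 0 := left_ne_zero_of_mul h2
  have hq2 : q2 ≠ 0 := right_ne_zero_of_mul h2
  field_simp at hcond ⊢
  linear_combination (1 + H00 - H10 - H01) * hcond
end

section
/- Let D_x(x) = b(x)² − 4a(x)c(x) with a(x) = −x[λ̂₂(1+λ̂₁(1−x)) + L₂ + L₃x], c(x) = −t̄₁t̄₂α₂â₁x, b(x) = x[λ̂ + λ̂₁λ̂₂ + t̄₁t̄₂(α₁â₂+α₂â₁) + L₁+L₂+L₃] − t̄₁t̄₂α₁â₂ − [λ̂₁(1+λ̂₂)+L₁]x². Then D_x(0) = (t̄₁t̄₂α₁â₂)² > 0, and D_x(1) ≥ 0 with equality iff the drift condition holds; hence D_x, a polynomial of degree 4, has its real branch points ordered as 0 < x₁ < x₂ ≤ 1 under the stability assumption. -/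
theorem stmt19 (lh1 lh2 L1 L2 L3 t1b t2b a1 a2 ah1 ah2 l1 : ℝ)
    (hlh1 : 0 < lh1) (hlh2 : 0 < lh2) (hL1 : 0 < L1) (hL2 : 0 < L2) (hL3 : 0 < L3)
    (ht1b : 0 < t1b) (ht2b : 0 < t2b) (ha1 : 0 < a1) (ha2 : 0 < a2)
    (hah1 : 0 < ah1) (hah2 : 0 < ah2)
    (hl1 : l1 = lh1 + L1 + L3)
    (hstab : l1 < t1b * t2b * a1 * ah2)
    (a b c Dx : ℝ → ℝ)
    (ha' : ∀ x, a x = -x * (lh2 * (1 + lh1 * (1 - x)) + L2 + L3 * x))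
    (hc' : ∀ x, c x = -(t1b * t2b * a2 * ah1) * x)
    (hb' : ∀ x, b x = x * ((lh1 + lh2) + lh1 * lh2
          + t1b * t2b * (a1 * ah2 + a2 * ah1) + L1 + L2 + L3)
        - t1b * t2b * a1 * ah2 - (lh1 * (1 + lh2) + L1) * x ^ 2)
    (hDx : ∀ x, Dx x = (b x) ^ 2 - 4 * (a x) * (c x)) :
    Dx 0 = (t1b * t2b * a1 * ah2) ^ 2 ∧ 0 < Dx 0 ∧ 0 ≤ Dx 1 ∧
    ∃ x1 x2 : ℝ, 0 < x1 ∧ x1 < x2 ∧ x2 ≤ 1 ∧ Dx x1 = 0 ∧ Dx x2 = 0 := by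
  have hD0 : Dx 0 = (t1b * t2b * a1 * ah2) ^ 2 := by
    rw [hDx, hb', ha', hc']; ring
  have hD0pos : 0 < Dx 0 := by
    rw [hD0]; positivity
  have hD1 : Dx 1 = (lh2 + L2 + L3 - t1b * t2b * a2 * ah1) ^ 2 := by
    rw [hDx, hb', ha', hc']; ring
  have hD1nn : 0 ≤ Dx 1 := by rw [hD1]; positivity
  -- continuity
  have hbc : Continuous b := by
    have : b = fun x => x * ((lh1 + lh2) + lh1 * lh2
          + t1b * t2b * (a1 * ah2 + a2 * ah1) + L1 + L2 + L3)
        - t1b * t2b * a1 * ah2 - (lh1 * (1 + lh2) + L1) * x ^ 2 := funext hb'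
    rw [this]; fun_prop
  have hac : Continuous a := by
    have : a = fun x => -x * (lh2 * (1 + lh1 * (1 - x)) + L2 + L3 * x) := funext ha'
    rw [this]; fun_prop
  have hcc : Continuous c := by
    have : c = fun x => -(t1b * t2b * a2 * ah1) * x := funext hc'
    rw [this]; fun_prop
  have hDc : Continuous Dx := by
    have : Dx = fun x => (b x) ^ 2 - 4 * (a x) * (c x) := funext hDx
    rw [this]; fun_prop
  -- b changes sign on [0,1]
  have hb0 : b 0 < 0 := by rw [hb']; nlinarith
  have hT2 : 0 < t1b * t2b * a2 * ah1 := by positivity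
  have hb1 : 0 < b 1 := by rw [hb']; nlinarith [hT2]
  obtain ⟨x0, hx0mem, hbx0⟩ : ∃ x0 ∈ Set.Ioo (0:ℝ) 1, b x0 = 0 := by
    have := intermediate_value_Ioo (le_of_lt one_pos) hbc.continuousOn
      (Set.mem_Ioo.mpr ⟨hb0, hb1⟩)
    obtain ⟨x0, hx0, hbx0⟩ := this
    exact ⟨x0, hx0, hbx0⟩
  obtain ⟨hx0pos, hx0lt1⟩ := hx0mem
  -- Dx is negative at x0
  have hbr : 0 < lh2 * (1 + lh1 * (1 - x0)) + L2 + L3 * x0 := by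
    nlinarith [mul_pos hlh2 (mul_pos hlh1 (by linarith : (0:ℝ) < 1 - x0)), mul_pos hL3 hx0pos]
  have hax0 : a x0 < 0 := by rw [ha']; nlinarith [mul_pos hx0pos hbr]
  have hcx0 : c x0 < 0 := by rw [hc']; nlinarith [mul_pos hT2 hx0pos]
  have hDx0neg : Dx x0 < 0 := by
    rw [hDx, hbx0]; nlinarith
  -- first root in (0, x0)
  obtain ⟨x1, hx1mem, hDx1⟩ : ∃ x1 ∈ Set.Ioo (0:ℝ) x0, Dx x1 = 0 := by
    have := intermediate_value_Ioo' (le_of_lt hx0pos) hDc.continuousOn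
      (Set.mem_Ioo.mpr ⟨hDx0neg, hD0pos⟩)
    obtain ⟨x1, hx1, h⟩ := this
    exact ⟨x1, hx1, h⟩
  -- second root in (x0, 1]
  obtain ⟨x2, hx2mem, hDx2⟩ : ∃ x2 ∈ Set.Icc x0 1, Dx x2 = 0 := by
    have := intermediate_value_Icc (le_of_lt hx0lt1) hDc.continuousOn
      (Set.mem_Icc.mpr ⟨le_of_lt hDx0neg, hD1nn⟩)
    obtain ⟨x2, hx2, h⟩ := this
    exact ⟨x2, hx2, h⟩
  have hx2gt : x0 < x2 := by
    rcases lt_or_eq_of_le hx2mem.1 with h | h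
    · exact h
    · exfalso; rw [← h] at hDx2; linarith [hDx0neg, hDx2.ge]
  exact ⟨hD0, hD0pos, hD1nn,
    x1, x2, hx1mem.1, lt_trans hx1mem.2 hx2gt, hx2mem.2, hDx1, hDx2⟩
end
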